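/- Let M be a matroid on a finite ground set E and let B₁, …, Bₙ be a pinned broken line shelling of the bases of M. Then for every element e ∈ E that is not a loop of M and satisfies e ∉ B₁, there is exactly one index i with restriction set R(B_i) = {e}; conversely, whenever R(B_i) is a singleton {e}, the element e is not a loop of M and e ∉ B₁. (Lemma 6.7 (lem:coveredAtoms), first part: the atoms of the restriction set poset are in bijection with the non-loop elements of E not in B₁.) -/

import Mathlib

/-!
The engine is a descent step. If `G` is the unique `ℓ`-lightest basis containing `S` and
`B ⊇ S` is another basis, symmetric exchange gives `x ∈ B \ G` and `y ∈ G \ B` such that both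
`B - x + y` and `G - y + x` are bases; the latter contains `S`, so it is heavier than `G`, i.e.
`ℓ y < ℓ x`. Thus `B - x + y` is lighter than `B`, hence earlier in a broken line shelling
witnessed by `ℓ`, and `x` is a restriction element of `B` outside `G`.

Pinning makes `B₁` the lightest basis for every witness, so (with `S = ∅`) every `Bᵢ ≠ B₁` has a
restriction element outside `B₁`. For a non-loop `e ∉ B₁` the first basis containing `e` therefore
has restriction set `{e}`. Conversely, if `R(Bₖ) = {e}` and an earlier basis contains `e`, then
the `ℓₖ`-lightest basis containing `e` is not `Bₖ`, and the descent step with `S = {e}` yields a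
restriction element of `Bₖ` other than `e`.
-/

/-- The `ℓ`-weight of a set `A ⊆ E`. -/
noncomputable def wt {α : Type*} (ℓ : α → ℝ) (A : Set α) : ℝ := ∑ᶠ e ∈ A, ℓ e

/-- `ℓ` is generic for `M`. -/
def Generic {α : Type*} (M : Matroid α) (ℓ : α → ℝ) : Prop :=
  Function.Injective ℓ ∧
    ∀ ⦃B B' : Set α⦄, M.IsBase B → M.IsBase B' → B ≠ B' → wt ℓ B ≠ wt ℓ B'

/-- `B` enumerates (without repetition) all the bases of `M`. -/
def EnumeratesBases {α : Type*} (M : Matroid α) {n : ℕ} (B : Fin n → Set α) : Prop :=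
  Function.Injective B ∧ (∀ i, M.IsBase (B i)) ∧ ∀ C, M.IsBase C → ∃ i, B i = C

/-- The restriction set of the facet `F j` in the enumeration `F`. -/
def restrictionSet {α : Type*} {n : ℕ} (F : Fin n → Set α) (j : Fin n) : Set α :=
  {x | x ∈ F j ∧ ∃ i : Fin n, i < j ∧ F j \ {x} ⊆ F i}

open Set

namespace Matroid

variable {α : Type*} {M : Matroid α} {B G : Set α} {x : α}

lemma IsBase.exists_symm_exchange (hB : M.IsBase B) (hG : M.IsBase G) (hx : x ∈ B \ G) :
    ∃ y ∈ G \ B, M.IsBase (insert y (B \ {x})) ∧ M.IsBase (insert x (G \ {y})) := by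
  have hxE : x ∈ M.E := hB.subset_ground hx.1
  have hC := hG.fundCircuit_isCircuit hxE hx.2
  have hK := fundCocircuit_isCocircuit hx.1 hB
  obtain ⟨y, ⟨hyC, hyK⟩, hyx⟩ :=
    (hC.isCocircuit_inter_nontrivial hK ⟨x, mem_fundCircuit .., mem_fundCocircuit ..⟩).exists_ne x
  have hyG : y ∈ G := by simpa [hyx] using M.fundCircuit_subset_insert x G hyC
  have hyB : y ∉ B := fun hyB ↦
    hyx (M.fundCocircuit_inter_eq hx.1 ▸ ⟨hyK, hyB⟩ : y ∈ ({x} : Set α))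
  refine ⟨y, ⟨hyG, hyB⟩, ?_, ?_⟩
  · have hxy : x ∈ M.fundCircuit y B := hB.mem_fundCocircuit_iff_mem_fundCircuit.mp hyK
    rw [hB.indep.mem_fundCircuit_iff (by rw [hB.closure_eq]; exact hG.subset_ground hyG) hyB,
      ← insert_sdiff_singleton_comm hyx] at hxy
    exact hB.exchange_isBase_of_indep hyB hxy
  · rw [hG.indep.mem_fundCircuit_iff (by rw [hG.closure_eq]; exact hxE) hx.2,
      ← insert_sdiff_singleton_comm hyx.symm] at hyC
    exact hG.exchange_isBase_of_indep hx.2 hyC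

end Matroid

lemma wt_insert_sdiff_singleton {α : Type*} (ℓ : α → ℝ) {A : Set α} {a b : α} (hA : A.Finite)
    (ha : a ∈ A) (hb : b ∉ A) :
    wt ℓ (insert b (A \ {a})) = wt ℓ A - ℓ a + ℓ b := by
  have hrest : wt ℓ A = ℓ a + wt ℓ (A \ {a}) := by
    rw [wt, wt, ← finsum_mem_insert (a := a) (s := A \ {a}) ℓ (fun h ↦ h.2 rfl)
      (hA.subset sdiff_subset), insert_sdiff_singleton, insert_eq_of_mem ha]
  rw [hrest, wt, finsum_mem_insert ℓ (fun h ↦ hb h.1) (hA.subset sdiff_subset), wt]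
  ring

def IsLightestBaseContaining {α : Type*} (M : Matroid α) (ℓ : α → ℝ) (S G : Set α) : Prop :=
  M.IsBase G ∧ S ⊆ G ∧ ∀ C, M.IsBase C → S ⊆ C → C ≠ G → wt ℓ G < wt ℓ C

section LightestBase

variable {α : Type*} {M : Matroid α} {ℓ : α → ℝ} {B G S : Set α}

lemma Generic.exists_isLightestBaseContaining [Finite α] (hℓ : Generic M ℓ) (hB : M.IsBase B)
    (hSB : S ⊆ B) : ∃ G, IsLightestBaseContaining M ℓ S G := by
  obtain ⟨G, ⟨hG, hSG⟩, hmin⟩ := exists_min_image {C | M.IsBase C ∧ S ⊆ C} (wt ℓ)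
    (toFinite _) ⟨B, hB, hSB⟩
  exact ⟨G, hG, hSG, fun C hC hSC hCG ↦
    (hmin C ⟨hC, hSC⟩).lt_of_ne (hℓ.2 hG hC hCG.symm)⟩

lemma IsLightestBaseContaining.exists_exchange_wt_lt [M.RankFinite]
    (hG : IsLightestBaseContaining M ℓ S G) (hB : M.IsBase B) (hSB : S ⊆ B) (hBG : B ≠ G) :
    ∃ x ∈ B \ G, ∃ y, M.IsBase (insert y (B \ {x})) ∧ wt ℓ (insert y (B \ {x})) < wt ℓ B := by
  obtain ⟨hGbase, hSG, hmin⟩ := hG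
  obtain ⟨x, hxB, hxG⟩ : (B \ G).Nonempty :=
    sdiff_nonempty.mpr fun hBG' ↦ hBG (hB.eq_of_subset_isBase hGbase hBG')
  obtain ⟨y, ⟨hyG, hyB⟩, hB', hG'⟩ := hB.exists_symm_exchange hGbase ⟨hxB, hxG⟩
  have hSG' : S ⊆ insert x (G \ {y}) := fun s hs ↦
    .inr ⟨hSG hs, fun hsy ↦ hyB (hsy ▸ hSB hs)⟩
  have hlt := hmin _ hG' hSG' fun h ↦ hxG (h ▸ mem_insert x _)
  rw [wt_insert_sdiff_singleton ℓ hGbase.finite hyG hxG] at hlt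
  refine ⟨x, ⟨hxB, hxG⟩, y, hB', ?_⟩
  rw [wt_insert_sdiff_singleton ℓ hB.finite hxB hyB]
  linarith

end LightestBase

lemma restrictionSet_eq_singleton_of_forall_lt_notMem {α : Type*} {n : ℕ} {F : Fin n → Set α}
    {k : Fin n} {e : α} (hek : e ∈ F k)
    (hfirst : ∀ j < k, e ∉ F j) (hR : (restrictionSet F k).Nonempty) :
    restrictionSet F k = {e} :=
  hR.subset_singleton_iff.mp fun _ ⟨_, j, hjk, hsub⟩ ↦
    by_contra fun hze ↦ hfirst j hjk (hsub ⟨hek, fun h ↦ hze h.symm⟩)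

section Shelling

variable {α : Type*} {M : Matroid α} {ℓ : α → ℝ} {n : ℕ} {B : Fin n → Set α} {G S : Set α}
  {i j : Fin n} {e : α}

lemma exists_mem_restrictionSet_notMem [M.RankFinite] (hBi : M.IsBase (B i))
    (hsurj : ∀ C, M.IsBase C → ∃ j, B j = C) (hwit : ∀ j, wt ℓ (B j) < wt ℓ (B i) → j < i)
    (hG : IsLightestBaseContaining M ℓ S G) (hS : S ⊆ B i) (hne : B i ≠ G) :
    ∃ x ∈ restrictionSet B i, x ∉ G := by
  obtain ⟨x, hx, y, hB', hlt⟩ := hG.exists_exchange_wt_lt hBi hS hne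
  obtain ⟨j, hj⟩ := hsurj _ hB'
  exact ⟨x, ⟨hx.1, j, hwit j (hj ▸ hlt), hj ▸ subset_insert _ _⟩, hx.2⟩

lemma notMem_of_lt_of_restrictionSet_eq_singleton [Finite α] (hℓ : Generic M ℓ)
    (hbase : ∀ i, M.IsBase (B i)) (hsurj : ∀ C, M.IsBase C → ∃ j, B j = C)
    (hwit : ∀ j, wt ℓ (B j) < wt ℓ (B i) ↔ j < i) (hR : restrictionSet B i = {e})
    (hji : j < i) : e ∉ B j := by
  intro hej
  obtain ⟨G, hG⟩ := hℓ.exists_isLightestBaseContaining (hbase j) (singleton_subset_iff.mpr hej)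
  have hGj : wt ℓ G ≤ wt ℓ (B j) := by
    by_cases h : B j = G
    · rw [h]
    · exact (hG.2.2 _ (hbase j) (singleton_subset_iff.mpr hej) h).le
  have hne : B i ≠ G := fun h ↦ by
    have := (hwit j).mpr hji
    rw [h] at this
    linarith
  have hei : e ∈ B i := (hR ▸ mem_singleton e : e ∈ restrictionSet B i).1
  obtain ⟨x, hx, hxG⟩ := exists_mem_restrictionSet_notMem (hbase i) hsurj (fun j ↦ (hwit j).mp) hG
    (singleton_subset_iff.mpr hei) hne
  rw [hR, mem_singleton_iff] at hx
  exact hxG (hx ▸ hG.2.1 rfl)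

end Shelling

theorem pinned_broken_line_atoms_general {α : Type*} [Fintype α]
    (M : Matroid α)
    {n : ℕ} (hn : 0 < n) (B : Fin n → Set α) (hB : EnumeratesBases M B)
    (ℓ : Fin n → α → ℝ) (hgen : ∀ i, Generic M (ℓ i))
    (hwit : ∀ i j : Fin n, wt (ℓ i) (B j) < wt (ℓ i) (B i) ↔ j < i)
    (hpin : ∀ i : Fin n, ∀ C : Set α, M.IsBase C → C ≠ B ⟨0, hn⟩ →
      wt (ℓ i) (B ⟨0, hn⟩) < wt (ℓ i) C) :
    (∀ e : α, M.Indep {e} → e ∉ B ⟨0, hn⟩ →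
      ∃! i : Fin n, restrictionSet B i = {e}) ∧
    (∀ (i : Fin n) (e : α), restrictionSet B i = {e} →
      M.Indep {e} ∧ e ∉ B ⟨0, hn⟩) := by
  obtain ⟨hBinj, hbase, hsurj⟩ := hB
  have hout (i : Fin n) (hi : B i ≠ B ⟨0, hn⟩) : ∃ x ∈ restrictionSet B i, x ∉ B ⟨0, hn⟩ :=
    exists_mem_restrictionSet_notMem (hbase i) hsurj (fun j ↦ (hwit i j).mp)
      ⟨hbase _, empty_subset _, fun C hC _ ↦ hpin i C hC⟩ (empty_subset _) hi
  refine ⟨fun e he he0 ↦ ?_, fun i e hR ↦ ?_⟩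
  · obtain ⟨C, hC, heC⟩ := he.exists_isBase_superset
    obtain ⟨i₀, rfl⟩ := hsurj C hC
    obtain ⟨i, hei, hmin⟩ := exists_min_image {i | e ∈ B i} id (toFinite _) ⟨i₀, heC rfl⟩
    have hfirst : ∀ j < i, e ∉ B j := fun j hj hej ↦ (hmin j hej).not_gt hj
    obtain ⟨x, hx, -⟩ := hout i fun h ↦ he0 (h ▸ hei)
    refine ⟨i, restrictionSet_eq_singleton_of_forall_lt_notMem hei hfirst ⟨x, hx⟩, fun k hk ↦ ?_⟩
    have hek : e ∈ B k := (hk ▸ mem_singleton e : e ∈ restrictionSet B k).1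
    rcases lt_trichotomy k i with h | h | h
    · exact absurd hek (hfirst k h)
    · exact h
    · exact absurd hei (notMem_of_lt_of_restrictionSet_eq_singleton (hgen k) hbase hsurj
        (hwit k) hk h)
  · have heR : e ∈ restrictionSet B i := hR ▸ mem_singleton e
    have hi0 : B i ≠ B ⟨0, hn⟩ := fun h ↦ by
      obtain ⟨-, j, hj, -⟩ := heR
      rw [hBinj h] at hj
      exact Nat.not_lt_zero j hj
    obtain ⟨x, hx, hx0⟩ := hout i hi0
    rw [hR, mem_singleton_iff] at hx
    exact ⟨(hbase i).indep.subset (singleton_subset_iff.mpr heR.1), hx ▸ hx0⟩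

theorem pinned_broken_line_atoms {α : Type*} [Fintype α]
    (M : Matroid α) (hE : M.E = Set.univ)
    {n : ℕ} (hn : 0 < n) (B : Fin n → Set α) (hB : EnumeratesBases M B)
    (ℓ : Fin n → α → ℝ) (hgen : ∀ i, Generic M (ℓ i))
    (hwit : ∀ i j : Fin n, wt (ℓ i) (B j) < wt (ℓ i) (B i) ↔ j < i)
    (hpin : ∀ i : Fin n, ∀ C : Set α, M.IsBase C → C ≠ B ⟨0, hn⟩ →
      wt (ℓ i) (B ⟨0, hn⟩) < wt (ℓ i) C) :
    (∀ e : α, M.Indep {e} → e ∉ B ⟨0, hn⟩ →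
      ∃! i : Fin n, restrictionSet B i = {e}) ∧
    (∀ (i : Fin n) (e : α), restrictionSet B i = {e} →
      M.Indep {e} ∧ e ∉ B ⟨0, hn⟩) :=
  pinned_broken_line_atoms_general M hn B hB ℓ hgen hwit hpin
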